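/- arXiv:1201.2499 — 3 statements merged into one kernel-verified Lean document; each statement's English description precedes it below -/
import Mathlib

section
/- Let T be a triangulated category, let X and Y be thick subcategories of T, assume that the subcategory of extensions X * Y is a triangulated subcategory of T, and let Q : T → T/(X ∩ Y) be the Verdier quotient functor. Then Q(X) * Q(Y) = Q(X * Y), where Q(X), Q(Y), Q(X * Y) denote the closures under isomorphism in T/(X ∩ Y) of the images of X, Y, X * Y under Q, and the star on the left is computed in T/(X ∩ Y). -/
/-!
A morphism `Q y ⟶ (Q x)⟦1⟧` in the Verdier quotient is a left fraction `y ⟶ z ← x⟦1⟧` whose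
second leg has its cone in `X ∩ Y ⊆ X`, so `z ∈ X` since `X` is triangulated. Completing
`y ⟶ z` to a triangle `z⟦-1⟧ ⟶ e ⟶ y ⟶ z` in `C` exhibits `e ∈ X * Y`, and since a
distinguished triangle is determined up to isomorphism by its third morphism, `Q e` is
isomorphic to any extension of `Q y` by `Q x` classified by that morphism. The converse
inclusion holds because `Q` is a triangulated functor.
-/

namespace Paper

open CategoryTheory Limits Triangulated Pretriangulated ZeroObject

universe w v u

variable {C : Type u} [Category.{v} C] [HasZeroObject C] [Preadditive C] [HasShift C ℤ]
  [∀ n : ℤ, (shiftFunctor C n).Additive] [Pretriangulated C]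

/-- The subcategory of extensions `X * Y`: objects `e` admitting a distinguished triangle
`x ⟶ e ⟶ y ⟶ x⟦1⟧` with `x ∈ X` and `y ∈ Y`. -/
def star (X Y : Set C) : Set C :=
  {e | ∃ (x y : C) (_ : x ∈ X) (_ : y ∈ Y) (f : x ⟶ e) (g : e ⟶ y) (h : y ⟶ x⟦(1 : ℤ)⟧),
    Triangle.mk f g h ∈ distTriang C}

/-- A (strictly full) triangulated subcategory: a class of objects containing `0`, closed
under isomorphisms, suspension, desuspension and extensions. -/
structure IsTriangulatedSubcat (S : Set C) : Prop where
  zero_mem : (0 : C) ∈ S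
  mem_of_iso : ∀ {a b : C}, (a ≅ b) → a ∈ S → b ∈ S
  shift_mem : ∀ {a : C}, a ∈ S → a⟦(1 : ℤ)⟧ ∈ S
  unshift_mem : ∀ {a : C}, a ∈ S → a⟦(-1 : ℤ)⟧ ∈ S
  ext₂ : ∀ {a e b : C} (f : a ⟶ e) (g : e ⟶ b) (h : b ⟶ a⟦(1 : ℤ)⟧),
    (Triangle.mk f g h ∈ distTriang C) → a ∈ S → b ∈ S → e ∈ S

/-- A thick subcategory: a triangulated subcategory closed under direct summands
(equivalently, retracts). -/
structure IsThickSubcat (S : Set C) extends IsTriangulatedSubcat S : Prop where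
  mem_of_retract : ∀ {a s : C}, s ∈ S → (∃ (i : a ⟶ s) (p : s ⟶ a), i ≫ p = 𝟙 a) → a ∈ S

/-- `(U, V)` is a stable t-structure in the (triangulated sub)category whose class of
objects is `S`: both are triangulated subcategories contained in `S`, `Hom(U, V) = 0`
and `U * V = S`. -/
structure IsStableTStructureIn (S U V : Set C) : Prop where
  subsetU : U ⊆ S
  subsetV : V ⊆ S
  triU : IsTriangulatedSubcat U
  triV : IsTriangulatedSubcat V
  hom_zero : ∀ {u v : C}, u ∈ U → v ∈ V → ∀ f : u ⟶ v, f = 0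
  star_eq : star U V = S

lemma IsTriangulatedSubcat.shift_all {S : Set C} (hS : IsTriangulatedSubcat S) (a : C) (n : ℤ)
    (ha : a ∈ S) : a⟦n⟧ ∈ S := by
  induction n using Int.induction_on with
  | zero => exact hS.mem_of_iso ((shiftFunctorZero C ℤ).app a).symm ha
  | succ i hi =>
      exact hS.mem_of_iso ((shiftFunctorAdd' C (i : ℤ) 1 ((i : ℤ) + 1) rfl).app a).symm
        (hS.shift_mem hi)
  | pred i hi =>
      exact hS.mem_of_iso
        ((shiftFunctorAdd' C (-(i : ℤ)) (-1) (-(i : ℤ) - 1) (by ring)).app a).symm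
        (hS.unshift_mem hi)

/-- The Mathlib `Triangulated.Subcategory` associated to a class of objects satisfying
`IsTriangulatedSubcat`. -/
def IsTriangulatedSubcat.toSubcategory {S : Set C} (hS : IsTriangulatedSubcat S) :
    ObjectProperty C :=
  (· ∈ S)

instance {S : Set C} (hS : IsTriangulatedSubcat S) : hS.toSubcategory.IsTriangulated where
  exists_zero := ⟨0, isZero_zero C, hS.zero_mem⟩
  isStableUnderShiftBy a := ⟨fun x hx => hS.shift_all x a hx⟩
  ext₂' T hT h₁ h₃ := ⟨T.obj₂, hS.ext₂ T.mor₁ T.mor₂ T.mor₃ hT h₁ h₃, ⟨Iso.refl _⟩⟩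

lemma IsTriangulatedSubcat.inter {X Y : Set C} (hX : IsTriangulatedSubcat X)
    (hY : IsTriangulatedSubcat Y) : IsTriangulatedSubcat (X ∩ Y) where
  zero_mem := ⟨hX.zero_mem, hY.zero_mem⟩
  mem_of_iso := fun e h => ⟨hX.mem_of_iso e h.1, hY.mem_of_iso e h.2⟩
  shift_mem := fun h => ⟨hX.shift_mem h.1, hY.shift_mem h.2⟩
  unshift_mem := fun h => ⟨hX.unshift_mem h.1, hY.unshift_mem h.2⟩
  ext₂ := fun f g h hT ha hb => ⟨hX.ext₂ f g h hT ha.1 hb.1, hY.ext₂ f g h hT ha.2 hb.2⟩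

/-- The Verdier quotient of `C` by the triangulated subcategory `S`. -/
abbrev VerdierQuotient {S : Set C} (hS : IsTriangulatedSubcat S) : Type _ :=
  hS.toSubcategory.trW.Localization

/-- The Verdier quotient functor. -/
noncomputable abbrev Vq {S : Set C} (hS : IsTriangulatedSubcat S) : C ⥤ VerdierQuotient hS :=
  hS.toSubcategory.trW.Q

/-- The essential image of a class of objects under a functor (the closure under
isomorphisms of the image). -/
def QSet {D : Type*} [Category D] (L : C ⥤ D) (S : Set C) : Set D :=
  {d | ∃ s ∈ S, Nonempty (L.obj s ≅ d)}

/-- The right perpendicular class `X^⊥`. -/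
def rightPerp (X : Set C) : Set C := {t | ∀ {x : C}, x ∈ X → ∀ f : x ⟶ t, f = 0}

/-- The left perpendicular class `^⊥X`. -/
def leftPerp (X : Set C) : Set C := {t | ∀ {x : C}, x ∈ X → ∀ f : t ⟶ x, f = 0}

section

variable {A B : Set C}

lemma mem_star_of_iso {e e' : C} (i : e ≅ e') (he : e ∈ star A B) : e' ∈ star A B := by
  obtain ⟨a, b, ha, hb, f, g, h, hT⟩ := he
  refine ⟨a, b, ha, hb, f ≫ i.hom, i.inv ≫ g, h, isomorphic_distinguished _ hT _ ?_⟩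
  refine Triangle.isoMk _ _ (Iso.refl _) i.symm (Iso.refl _) ?_ ?_ ?_
  all_goals dsimp only [Triangle.mk]; simp

lemma QSet_star_subset {D : Type*} [Category D] [HasZeroObject D] [Preadditive D]
    [HasShift D ℤ] [∀ n : ℤ, (shiftFunctor D n).Additive] [Pretriangulated D]
    (F : C ⥤ D) [F.CommShift ℤ] [F.IsTriangulated] :
    QSet F (star A B) ⊆ star (QSet F A) (QSet F B) := by
  rintro d ⟨e, ⟨a, b, ha, hb, f, g, h, hT⟩, ⟨i⟩⟩
  exact mem_star_of_iso i
    ⟨_, _, ⟨a, ha, ⟨Iso.refl _⟩⟩, ⟨b, hb, ⟨Iso.refl _⟩⟩, _, _, _, F.map_distinguished _ hT⟩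

lemma nonempty_obj₂_iso_of_arrowIso_mor₃ {T₁ T₂ : Triangle C} (h₁ : T₁ ∈ distTriang C)
    (h₂ : T₂ ∈ distTriang C) (e : Arrow.mk T₁.mor₃ ≅ Arrow.mk T₂.mor₃) :
    Nonempty (T₁.obj₂ ≅ T₂.obj₂) := by
  obtain ⟨e', -⟩ := exists_iso_of_arrow_iso _ _
    (rot_of_distTriang _ (rot_of_distTriang _ h₁))
    (rot_of_distTriang _ (rot_of_distTriang _ h₂)) e
  exact ⟨(shiftFunctor C (1 : ℤ)).preimageIso (Triangle.π₃.mapIso e')⟩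

lemma exists_distTriang_obj₂_mem_star {y z : C} (hy : y ∈ B) (hz : z⟦(-1 : ℤ)⟧ ∈ A)
    (f : y ⟶ z) :
    ∃ T ∈ distTriang C, T.obj₂ ∈ star A B ∧ Nonempty (Arrow.mk T.mor₃ ≅ Arrow.mk f) := by
  let ζ : z⟦(-1 : ℤ)⟧⟦(1 : ℤ)⟧ ≅ z := (shiftEquiv C (1 : ℤ)).counitIso.app z
  obtain ⟨e, f', g', hT⟩ := distinguished_cocone_triangle₂ (f ≫ ζ.inv)
  exact ⟨_, hT, ⟨_, _, hz, hy, _, _, _, hT⟩,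
    ⟨Arrow.isoMk (Iso.refl _) ζ (by dsimp only [Triangle.mk]; simp)⟩⟩

end

lemma IsTriangulatedSubcat.mem_of_trW {N X : Set C} (hN : IsTriangulatedSubcat N)
    (hX : IsTriangulatedSubcat X) (hNX : N ⊆ X) {a b : C} {s : a ⟶ b}
    (hs : hN.toSubcategory.trW s) (ha : a ∈ X) : b ∈ X := by
  obtain ⟨c, g, h, hT, hc⟩ := hs
  exact hX.ext₂ s g h hT ha (hNX hc)

variable [IsTriangulated C]

lemma IsTriangulatedSubcat.exists_arrowIso_map {N X : Set C} (hN : IsTriangulatedSubcat N)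
    (hX : IsTriangulatedSubcat X) (hNX : N ⊆ X) {D : Type*} [Category D] (L : C ⥤ D)
    [L.IsLocalization hN.toSubcategory.trW] {y w : C} (hw : w ∈ X) (ψ : L.obj y ⟶ L.obj w) :
    ∃ z ∈ X, ∃ f : y ⟶ z, Nonempty (Arrow.mk ψ ≅ Arrow.mk (L.map f)) := by
  obtain ⟨φ, rfl⟩ := Localization.exists_leftFraction L hN.toSubcategory.trW ψ
  refine ⟨φ.Y', hN.mem_of_trW hX hNX φ.hs hw, φ.f, ⟨Arrow.isoMk (Iso.refl _)
    (Localization.isoOfHom L hN.toSubcategory.trW φ.s φ.hs) ?_⟩⟩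
  simp [φ.map_comp_map_s L (Localization.inverts L _)]

lemma IsTriangulatedSubcat.star_QSet_subset {N X Y : Set C} (hN : IsTriangulatedSubcat N)
    (hX : IsTriangulatedSubcat X) (hNX : N ⊆ X) :
    star (QSet (Vq hN) X) (QSet (Vq hN) Y) ⊆ QSet (Vq hN) (star X Y) := by
  rintro d ⟨a, b, ⟨x, hx, ⟨ex⟩⟩, ⟨y, hy, ⟨ey⟩⟩, f, g, h, hT⟩
  set L := Vq hN
  let σ : a⟦(1 : ℤ)⟧ ≅ L.obj (x⟦(1 : ℤ)⟧) :=
    (shiftFunctor _ (1 : ℤ)).mapIso ex.symm ≪≫ ((L.commShiftIso (1 : ℤ)).app x).symm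
  obtain ⟨z, hz, u, ⟨eu⟩⟩ :=
    hN.exists_arrowIso_map hX hNX L (hX.shift_mem hx) (ey.hom ≫ h ≫ σ.hom)
  obtain ⟨T, hT', he, ⟨eT⟩⟩ := exists_distTriang_obj₂_mem_star hy (hX.unshift_mem hz) u
  have eh : Arrow.mk h ≅ Arrow.mk (ey.hom ≫ h ≫ σ.hom) := Arrow.isoMk ey.symm σ
  have eLT : Arrow.mk (L.map T.mor₃ ≫ (L.commShiftIso (1 : ℤ)).hom.app T.obj₁) ≅
      Arrow.mk (L.map T.mor₃) :=
    Arrow.isoMk (Iso.refl _) ((L.commShiftIso (1 : ℤ)).app T.obj₁).symm (by simp)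
  obtain ⟨i⟩ := nonempty_obj₂_iso_of_arrowIso_mor₃ hT (L.map_distinguished _ hT')
    (eh ≪≫ eu ≪≫ (L.mapArrow.mapIso eT).symm ≪≫ eLT.symm)
  exact ⟨T.obj₂, he, ⟨i.symm⟩⟩

theorem statement3_general {X Y : Set C} (hX : IsThickSubcat X) (hY : IsThickSubcat Y) :
    star (QSet (Vq (hX.toIsTriangulatedSubcat.inter hY.toIsTriangulatedSubcat)) X) (QSet (Vq (hX.toIsTriangulatedSubcat.inter hY.toIsTriangulatedSubcat)) Y) =
      QSet (Vq (hX.toIsTriangulatedSubcat.inter hY.toIsTriangulatedSubcat)) (star X Y) :=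
  (IsTriangulatedSubcat.star_QSet_subset _ hX.toIsTriangulatedSubcat
    Set.inter_subset_left).antisymm (QSet_star_subset _)

/-- If `X`, `Y` are thick subcategories of `C` such that `X * Y` is a triangulated
subcategory, and `Q : C ⥤ C/(X ∩ Y)` is the Verdier quotient functor, then
`Q(X) * Q(Y) = Q(X * Y)` in `C/(X ∩ Y)`. -/
theorem statement3 {X Y : Set C} (hX : IsThickSubcat X) (hY : IsThickSubcat Y)
    (hXY : IsTriangulatedSubcat (star X Y)) :
    star (QSet (Vq (hX.toIsTriangulatedSubcat.inter hY.toIsTriangulatedSubcat)) X) (QSet (Vq (hX.toIsTriangulatedSubcat.inter hY.toIsTriangulatedSubcat)) Y) =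
      QSet (Vq (hX.toIsTriangulatedSubcat.inter hY.toIsTriangulatedSubcat)) (star X Y) :=
  statement3_general hX hY

end Paper
end

section
/- Let T be a triangulated category, let (U, V) be a stable t-structure in T, and let X be a thick subcategory of T such that (X ∩ U, X ∩ V) is a stable t-structure in X. Then U * X = U * (X ∩ V) and X * V = (X ∩ U) * V. -/
namespace Paper

open CategoryTheory Limits Triangulated Pretriangulated ZeroObject

universe w v u

variable {C : Type u} [Category.{v} C] [HasZeroObject C] [Preadditive C] [HasShift C ℤ]
  [∀ n : ℤ, (shiftFunctor C n).Additive] [Pretriangulated C]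

lemma mem_star_iff {A B : Set C} {e : C} :
    e ∈ star A B ↔ ObjectProperty.extensionProduct (· ∈ A) (· ∈ B) e :=
  ⟨fun ⟨x, y, hx, hy, f, g, h, hT⟩ => ⟨x, y, f, g, h, hT, hx, hy⟩,
    fun ⟨x, y, f, g, h, hT, hx, hy⟩ => ⟨x, y, hx, hy, f, g, h, hT⟩⟩

lemma star_mono {A A' B B' : Set C} (hA : A ⊆ A') (hB : B ⊆ B') : star A B ⊆ star A' B' :=
  fun _ ⟨x, y, hx, hy, f, g, h, hT⟩ => ⟨x, y, hA hx, hB hy, f, g, h, hT⟩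

lemma IsTriangulatedSubcat.star_subset {S A B : Set C} (hS : IsTriangulatedSubcat S)
    (hA : A ⊆ S) (hB : B ⊆ S) : star A B ⊆ S :=
  fun _ ⟨_, _, hx, hy, f, g, h, hT⟩ => hS.ext₂ f g h hT (hA hx) (hB hy)

lemma star_assoc [IsTriangulated C] (A B D : Set C) :
    star (star A B) D = star A (star B D) := by
  ext e
  simp only [mem_star_iff]
  rw [ObjectProperty.extensionProduct_assoc]

variable [IsTriangulated C]

theorem statement12_general {U V X : Set C} (hUV : IsStableTStructureIn Set.univ U V)
    (h : IsStableTStructureIn X (X ∩ U) (X ∩ V)) :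
    star U X = star U (X ∩ V) ∧ star X V = star (X ∩ U) V := by
  constructor
  · refine subset_antisymm ?_ (star_mono subset_rfl Set.inter_subset_left)
    calc star U X = star (star U (X ∩ U)) (X ∩ V) := by rw [star_assoc, h.star_eq]
      _ ⊆ star U (X ∩ V) :=
        star_mono (hUV.triU.star_subset subset_rfl Set.inter_subset_right) subset_rfl
  · refine subset_antisymm ?_ (star_mono Set.inter_subset_left subset_rfl)
    calc star X V = star (X ∩ U) (star (X ∩ V) V) := by rw [← star_assoc, h.star_eq]
      _ ⊆ star (X ∩ U) V :=
        star_mono subset_rfl (hUV.triV.star_subset Set.inter_subset_right subset_rfl)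

/-- Let `(U, V)` be a stable t-structure in `C` and `X` a thick subcategory such that
`(X ∩ U, X ∩ V)` is a stable t-structure in `X`.  Then `U * X = U * (X ∩ V)` and
`X * V = (X ∩ U) * V`. -/
theorem statement12 {U V X : Set C} (hUV : IsStableTStructureIn Set.univ U V)
    (hX : IsThickSubcat X) (h : IsStableTStructureIn X (X ∩ U) (X ∩ V)) :
    star U X = star U (X ∩ V) ∧ star X V = star (X ∩ U) V :=
  statement12_general hUV h

end Paper
end

section
/- Let T be a triangulated category and let (X, Y) and (Y, Z) be stable t-structures in T such that the subcategory of extensions Z * X is a triangulated subcategory of T. Then (X, Y ∩ (Z * X)) and (Y ∩ (Z * X), Z) are stable t-structures in Z * X. -/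
/-!
If `(U, V)` is a stable t-structure in `S` and `S' ⊆ S` is a triangulated subcategory containing
`U`, then every `e ∈ S'` sits in a triangle `u → e → v → u⟦1⟧`, and `v ∈ S'` by two-out-of-three;
so `(U, V ∩ S')` is a stable t-structure in `S'`, and dually for `V ⊆ S'`. Both `X` and `Z`
lie in `Z * X`, which gives the two halves of the theorem.
-/

namespace Paper

open CategoryTheory Limits Triangulated Pretriangulated ZeroObject

universe w v u

variable {C : Type u} [Category.{v} C] [HasZeroObject C] [Preadditive C] [HasShift C ℤ]
  [∀ n : ℤ, (shiftFunctor C n).Additive] [Pretriangulated C]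

namespace IsTriangulatedSubcat

variable {S : Set C} (hS : IsTriangulatedSubcat S) {a e b : C} (f : a ⟶ e) (g : e ⟶ b)
  (h : b ⟶ a⟦(1 : ℤ)⟧) (hT : Triangle.mk f g h ∈ distTriang C)
include hS hT

lemma ext₃ (ha : a ∈ S) (he : e ∈ S) : b ∈ S :=
  hS.ext₂ _ _ _ (rot_of_distTriang _ hT) he (hS.shift_mem ha)

lemma ext₁ (he : e ∈ S) (hb : b ∈ S) : a ∈ S :=
  hS.ext₂ _ _ _ (inv_rot_of_distTriang _ hT) (hS.unshift_mem hb) he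

end IsTriangulatedSubcat

lemma subset_star_left {A B : Set C} (hB : (0 : C) ∈ B) : A ⊆ star A B := fun a ha =>
  ⟨a, 0, ha, hB, 𝟙 a, 0, 0, contractible_distinguished a⟩

lemma subset_star_right {A B : Set C} (hA : (0 : C) ∈ A) : B ⊆ star A B := fun b hb =>
  ⟨0, b, hA, hb, 0, 𝟙 b, 0, contractible_distinguished₁ b⟩

namespace IsStableTStructureIn

variable {S S' U V : Set C} (hUV : IsStableTStructureIn S U V) (hS' : IsTriangulatedSubcat S')
  (hS'S : S' ⊆ S)
include hUV hS' hS'S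

lemma restrict_left (hU : U ⊆ S') : IsStableTStructureIn S' U (V ∩ S') := by
  refine ⟨hU, Set.inter_subset_right, hUV.triU, hUV.triV.inter hS',
    fun hu hv f => hUV.hom_zero hu hv.1 f, ?_⟩
  refine subset_antisymm (hS'.star_subset hU Set.inter_subset_right) fun e he => ?_
  obtain ⟨u, v, hu, hv, f, g, h, hT⟩ : e ∈ star U V := hUV.star_eq ▸ hS'S he
  exact ⟨u, v, hu, ⟨hv, hS'.ext₃ f g h hT (hU hu) he⟩, f, g, h, hT⟩

lemma restrict_right (hV : V ⊆ S') : IsStableTStructureIn S' (U ∩ S') V := by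
  refine ⟨Set.inter_subset_right, hV, hUV.triU.inter hS', hUV.triV,
    fun hu hv f => hUV.hom_zero hu.1 hv f, ?_⟩
  refine subset_antisymm (hS'.star_subset Set.inter_subset_right hV) fun e he => ?_
  obtain ⟨u, v, hu, hv, f, g, h, hT⟩ : e ∈ star U V := hUV.star_eq ▸ hS'S he
  exact ⟨u, v, ⟨hu, hS'.ext₁ f g h hT he (hV hv)⟩, hv, f, g, h, hT⟩

end IsStableTStructureIn

variable [IsTriangulated C]

/-- Let `(X, Y)` and `(Y, Z)` be stable t-structures in `C` with `Z * X` a triangulated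
subcategory of `C`.  Then `(X, Y ∩ (Z * X))` and `(Y ∩ (Z * X), Z)` are stable
t-structures in `Z * X`. -/
theorem statement13 {X Y Z : Set C} (hXY : IsStableTStructureIn Set.univ X Y)
    (hYZ : IsStableTStructureIn Set.univ Y Z) (hZX : IsTriangulatedSubcat (star Z X)) :
    IsStableTStructureIn (star Z X) X (Y ∩ star Z X) ∧
      IsStableTStructureIn (star Z X) (Y ∩ star Z X) Z :=
  ⟨hXY.restrict_left hZX (Set.subset_univ _) (subset_star_right hYZ.triV.zero_mem),
    hYZ.restrict_right hZX (Set.subset_univ _) (subset_star_left hXY.triU.zero_mem)⟩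

end Paper
end
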